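/- arXiv:2011.00234 — 4 statements merged into one kernel-verified Lean document; each statement's English description precedes it below -/
import Mathlib

section
/- Let d ≥ 2, 0 < α < 2, γ ∈ ℝ, q > α − 1, δ ∈ ℝ and β ≥ 0. There exist constants 0 < c ≤ C, depending only on d, α, γ, β, q, δ, such that for every R > 0, every point x = (0̃, x_d) with 0 < x_d ≤ 2R/3, and all a₂, a₃ with 3x_d/2 ≤ a₃ ≤ a₂ ≤ R, one has c · R^{γ+α−q} (F(a₃/R; γ+α−q−1, β) − F(a₂/R; γ+α−q−1, β)) ≤ ∫_{D(R,a₂)∖D(R,a₃)} f(y; γ, β, q, δ, x) dy ≤ C · R^{γ+α−q} (F(a₃/R; γ+α−q−1, β) − F(a₂/R; γ+α−q−1, β)). -/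
open MeasureTheory Real

noncomputable section

/-- Points of `ℝ^d`, written as pairs `(x̃, x_d) ∈ ℝ^{d-1} × ℝ` (here `m = d - 1`). -/
abbrev Pt (m : ℕ) := EuclideanSpace ℝ (Fin m) × ℝ

/-- The Euclidean norm on `Pt m`. -/
noncomputable def nrm {m : ℕ} (x : Pt m) : ℝ := Real.sqrt (‖x.1‖ ^ 2 + x.2 ^ 2)

/-- The box `D_w̃(a,b) = {y = (ỹ, y_d) : |ỹ - w̃| < a, 0 < y_d < b}`. -/
def Dbox {m : ℕ} (w : EuclideanSpace ℝ (Fin m)) (a b : ℝ) : Set (Pt m) :=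
  {y | ‖y.1 - w‖ < a ∧ 0 < y.2 ∧ y.2 < b}

/-- The function `f(y; γ, β, q, δ, x)`. -/
noncomputable def ff {m : ℕ} (d : ℕ) (α R γ β q δ : ℝ) (x y : Pt m) : ℝ :=
  y.2 ^ γ * nrm (x - y) ^ (-(d : ℝ) + α - q) * (Real.log (1 + 2 * R / y.2)) ^ β *
    (Real.log (1 + nrm (x - y) / min (max x.2 y.2) (nrm (x - y)))) ^ δ

/-- The function `F(u; γ', β) = ∫_u^1 h^{γ'} (log(2/h))^β dh`. -/
noncomputable def Ff (γ' β : ℝ) (u : ℝ) : ℝ := ∫ h in u..(1 : ℝ), h ^ γ' * (Real.log (2 / h)) ^ β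

/-!
Write `y = (z, t)` with `z ∈ ℝ^{d-1}`. Since `t ≥ 3 x_d / 2`, the distance `r = |x - y|` is
comparable to `|z| + t`, and the quotient inside the last logarithm is comparable to
`(|z| + t) / t`: it lies in `[1, 6]` when `|z| < t`, and its logarithm grows slower than any
power in general. Hence the integral of `f` over the slice `{y_d = t}` is comparable to
`t ^ (γ + α - q - 1) * log (1 + 2R/t) ^ β`: from below by integrating only over `|z| < t`, from
above by integrating `(|z| + t) ^ (-d + α - q + ε)` over all of `ℝ^{d-1}`, which converges for
small `ε` because `q > α - 1` and scales in `t`. Finally `log (1 + 2R/t)` is comparable to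
`log (2R/t)` for `t ≤ R`, and the substitution `t = R h` turns the remaining integral over
`[a₃, a₂)` into `R ^ (γ + α - q) (F(a₃/R) - F(a₂/R))`.
-/

theorem Real.log_one_add_le_nat_mul {a b : ℝ} (n : ℕ) (ha : 0 ≤ a) (hb : 0 ≤ b)
    (hba : b ≤ n * a) : log (1 + b) ≤ n * log (1 + a) := by
  rw [← Real.log_pow]
  exact Real.log_le_log (by positivity)
    ((add_le_add_right hba 1).trans (one_add_mul_le_pow (by linarith) n))

theorem Real.rpow_le_abs_rpow_mul_rpow {M N K : ℝ} (δ : ℝ) (hN : 0 < N) (hK : 0 < K)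
    (hMN : M ≤ K * N) (hNM : N ≤ K * M) : M ^ δ ≤ K ^ |δ| * N ^ δ := by
  have hM : 0 < M := pos_of_mul_pos_right (hN.trans_le hNM) hK.le
  rcases le_total 0 δ with hδ | hδ
  · rw [abs_of_nonneg hδ, ← Real.mul_rpow hK.le hN.le]
    exact Real.rpow_le_rpow hM.le hMN hδ
  · rw [abs_of_nonpos hδ, Real.rpow_neg hK.le, ← div_eq_inv_mul, ← Real.div_rpow hN.le hK.le]
    exact Real.rpow_le_rpow_of_nonpos (by positivity) (by rwa [div_le_iff₀' hK]) hδ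

theorem Real.min_rpow_le_rpow {a b x : ℝ} (δ : ℝ) (ha : 0 < a) (hax : a ≤ x) (hxb : x ≤ b) :
    min (a ^ δ) (b ^ δ) ≤ x ^ δ := by
  rcases le_total 0 δ with hδ | hδ
  · exact (min_le_left _ _).trans (Real.rpow_le_rpow ha.le hax hδ)
  · exact (min_le_right _ _).trans (Real.rpow_le_rpow_of_nonpos (ha.trans_le hax) hxb hδ)

theorem Real.exists_log_one_add_rpow_le_mul_rpow (δ : ℝ) {ε : ℝ} (hε : 0 < ε) :
    ∃ B, 0 ≤ B ∧ ∀ u : ℝ, 1 ≤ u → log (1 + u) ^ δ ≤ B * u ^ ε := by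
  have hlog2 : 0 < log 2 := Real.log_pos one_lt_two
  rcases le_or_gt δ 0 with hδ | hδ
  · refine ⟨log 2 ^ δ, by positivity, fun u hu => ?_⟩
    calc log (1 + u) ^ δ ≤ log 2 ^ δ :=
          Real.rpow_le_rpow_of_nonpos hlog2 (Real.log_le_log two_pos (by linarith)) hδ
      _ ≤ log 2 ^ δ * u ^ ε := le_mul_of_one_le_right (by positivity) (Real.one_le_rpow hu hε.le)
  · set c := ε / δ
    have hc : 0 < c := div_pos hε hδ
    refine ⟨(2 ^ c / c) ^ δ, by positivity, fun u hu => ?_⟩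
    have hu0 : 0 < u := one_pos.trans_le hu
    have hlog : log (1 + u) ≤ 2 ^ c / c * u ^ c :=
      calc log (1 + u) ≤ (1 + u) ^ c / c := Real.log_le_rpow_div (by linarith) hc
        _ ≤ (2 * u) ^ c / c := by gcongr; linarith
        _ = 2 ^ c / c * u ^ c := by rw [Real.mul_rpow two_pos.le hu0.le]; ring
    calc log (1 + u) ^ δ ≤ (2 ^ c / c * u ^ c) ^ δ :=
          Real.rpow_le_rpow (Real.log_nonneg (by linarith)) hlog hδ.le
      _ = (2 ^ c / c) ^ δ * u ^ ε := by
          rw [Real.mul_rpow (by positivity) (by positivity), ← Real.rpow_mul hu0.le,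
            div_mul_cancel₀ ε hδ.ne']

theorem Real.log_one_add_le_two_mul_log {w : ℝ} (hw : 2 ≤ w) : log (1 + w) ≤ 2 * log w := by
  rw [← Real.log_rpow (by linarith)]
  exact Real.log_le_log (by linarith) (by norm_num; nlinarith)

theorem Real.log_one_add_rpow_nonneg {w : ℝ} (hw : 0 ≤ w) (β : ℝ) : 0 ≤ log (1 + w) ^ β :=
  Real.rpow_nonneg (Real.log_nonneg (by linarith)) β

theorem ENNReal.ofReal_mul_le_ofReal_mul {a b x : ℝ} (ha : 0 ≤ a) (hab : a ≤ b) :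
    ENNReal.ofReal (a * x) ≤ ENNReal.ofReal (b * x) := by
  rcases le_total 0 x with hx | hx
  · exact ENNReal.ofReal_le_ofReal (mul_le_mul_of_nonneg_right hab hx)
  · rw [ENNReal.ofReal_of_nonpos (mul_nonpos_of_nonneg_of_nonpos ha hx)]
    exact bot_le

theorem lintegral_ofReal_const_mul {X : Type*} [MeasurableSpace X] (μ : Measure X) {c : ℝ}
    (hc : 0 ≤ c) (f : X → ℝ) :
    ∫⁻ x, ENNReal.ofReal (c * f x) ∂μ = ENNReal.ofReal c * ∫⁻ x, ENNReal.ofReal (f x) ∂μ := by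
  simp_rw [ENNReal.ofReal_mul hc]
  exact lintegral_const_mul' _ _ ENNReal.ofReal_ne_top

theorem ofReal_mul_le_setLIntegral {X : Type*} [MeasurableSpace X] {μ : Measure X} {s : Set X}
    (hs : MeasurableSet s) {c A : ℝ} {g : X → ℝ} {F : X → ENNReal} (hc : 0 ≤ c)
    (hA : ENNReal.ofReal A ≤ ∫⁻ x in s, ENNReal.ofReal (g x) ∂μ)
    (hF : ∀ x ∈ s, ENNReal.ofReal (c * g x) ≤ F x) :
    ENNReal.ofReal (c * A) ≤ ∫⁻ x in s, F x ∂μ :=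
  calc ENNReal.ofReal (c * A) = ENNReal.ofReal c * ENNReal.ofReal A := ENNReal.ofReal_mul hc
    _ ≤ ENNReal.ofReal c * ∫⁻ x in s, ENNReal.ofReal (g x) ∂μ := by gcongr
    _ = ∫⁻ x in s, ENNReal.ofReal (c * g x) ∂μ := (lintegral_ofReal_const_mul _ hc _).symm
    _ ≤ _ := setLIntegral_mono' hs hF

theorem setLIntegral_le_ofReal_mul {X : Type*} [MeasurableSpace X] {μ : Measure X} {s : Set X}
    (hs : MeasurableSet s) {C A : ℝ} {g : X → ℝ} {F : X → ENNReal} (hC : 0 ≤ C)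
    (hA : ∫⁻ x in s, ENNReal.ofReal (g x) ∂μ ≤ ENNReal.ofReal A)
    (hF : ∀ x ∈ s, F x ≤ ENNReal.ofReal (C * g x)) :
    ∫⁻ x in s, F x ∂μ ≤ ENNReal.ofReal (C * A) :=
  calc ∫⁻ x in s, F x ∂μ ≤ ∫⁻ x in s, ENNReal.ofReal (C * g x) ∂μ := setLIntegral_mono' hs hF
    _ = ENNReal.ofReal C * ∫⁻ x in s, ENNReal.ofReal (g x) ∂μ := lintegral_ofReal_const_mul _ hC _
    _ ≤ ENNReal.ofReal C * ENNReal.ofReal A := by gcongr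
    _ = ENNReal.ofReal (C * A) := (ENNReal.ofReal_mul hC).symm

section Scaling

variable {E : Type*} [NormedAddCommGroup E] [NormedSpace ℝ E] [MeasurableSpace E] [BorelSpace E]
  [FiniteDimensional ℝ E] (μ : Measure E) [μ.IsAddHaarMeasure]

theorem lintegral_comp_inv_smul_of_pos (f : E → ENNReal) {t : ℝ} (ht : 0 < t) :
    ∫⁻ x, f (t⁻¹ • x) ∂μ = ENNReal.ofReal (t ^ Module.finrank ℝ E) * ∫⁻ x, f x ∂μ := by
  have ht' : t⁻¹ ≠ 0 := inv_ne_zero ht.ne'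
  calc ∫⁻ x, f (t⁻¹ • x) ∂μ = ∫⁻ x, f x ∂(μ.map (t⁻¹ • ·)) :=
        (lintegral_map_equiv f
          (Homeomorph.smul (isUnit_iff_ne_zero.2 ht').unit).toMeasurableEquiv).symm
    _ = _ := by simp [Measure.map_addHaar_smul μ ht', lintegral_smul_measure, abs_of_pos ht]

theorem lintegral_norm_add_rpow {t : ℝ} (ht : 0 < t) (p : ℝ) :
    ∫⁻ z, ENNReal.ofReal ((‖z‖ + t) ^ p) ∂μ =
      ENNReal.ofReal (t ^ (Module.finrank ℝ E + p)) * ∫⁻ z, ENNReal.ofReal ((1 + ‖z‖) ^ p) ∂μ := by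
  have h : ∀ z : E, (‖z‖ + t) ^ p = t ^ p * (1 + ‖t⁻¹ • z‖) ^ p := fun z => by
    rw [← Real.mul_rpow ht.le (by positivity), norm_smul, Real.norm_of_nonneg (inv_nonneg.2 ht.le)]
    field_simp
    ring_nf
  simp_rw [h, ENNReal.ofReal_mul (Real.rpow_nonneg ht.le p)]
  rw [lintegral_const_mul' _ _ ENNReal.ofReal_ne_top,
    lintegral_comp_inv_smul_of_pos μ (fun z => ENNReal.ofReal ((1 + ‖z‖) ^ p)) ht,
    ← mul_assoc, ← ENNReal.ofReal_mul (by positivity), Real.rpow_add ht, Real.rpow_natCast,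
    mul_comm (t ^ p)]

end Scaling

section Kernel

variable {m : ℕ} {xd t : ℝ} (z : EuclideanSpace ℝ (Fin m))

theorem nrm_sub_eq : nrm (((0 : EuclideanSpace ℝ (Fin m)), xd) - (z, t)) =
    √(‖z‖ ^ 2 + (xd - t) ^ 2) := by
  simp [nrm]

theorem norm_le_nrm_sub : ‖z‖ ≤ nrm (((0 : EuclideanSpace ℝ (Fin m)), xd) - (z, t)) := by
  rw [nrm_sub_eq]
  exact Real.le_sqrt_of_sq_le (by nlinarith)

theorem div_three_le_nrm_sub (hxd : 0 ≤ xd) (hxt : 3 * xd ≤ 2 * t) :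
    t / 3 ≤ nrm (((0 : EuclideanSpace ℝ (Fin m)), xd) - (z, t)) := by
  rw [nrm_sub_eq]
  exact Real.le_sqrt_of_sq_le (by nlinarith [sq_nonneg ‖z‖, mul_nonneg hxd hxd])

theorem nrm_sub_le (hxd : 0 ≤ xd) (hxt : xd ≤ 2 * t) :
    nrm (((0 : EuclideanSpace ℝ (Fin m)), xd) - (z, t)) ≤ ‖z‖ + t := by
  rw [nrm_sub_eq]
  exact Real.sqrt_le_iff.2 ⟨by linarith [norm_nonneg z], by nlinarith [norm_nonneg z]⟩

end Kernel

section Pointwise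

variable {m d : ℕ} {α γ β q δ R xd t : ℝ} (z : EuclideanSpace ℝ (Fin m))

theorem ff_lower_bound (he : -(d : ℝ) + α - q ≤ 0) (hR : 0 ≤ R) (hxd : 0 < xd)
    (hxt : 3 * xd ≤ 2 * t) (hz : ‖z‖ < t) :
    2 ^ (-(d : ℝ) + α - q) * min (log 2 ^ δ) (log 7 ^ δ) *
        (t ^ (γ + (-(d : ℝ) + α - q)) * log (1 + 2 * R / t) ^ β) ≤
      ff d α R γ β q δ ((0 : EuclideanSpace ℝ (Fin m)), xd) (z, t) := by
  have ht : 0 < t := by linarith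
  have hr3 := div_three_le_nrm_sub z hxd.le hxt
  have hr2 := nrm_sub_le z (t := t) hxd.le (by linarith)
  simp only [ff, max_eq_right (by linarith : xd ≤ t)]
  set r := nrm (((0 : EuclideanSpace ℝ (Fin m)), xd) - (z, t))
  set e := -(d : ℝ) + α - q
  set ρ := r / min t r
  have hr0 : 0 < r := by linarith
  have hmin : t / 3 ≤ min t r := le_min (by linarith) hr3
  have hρ1 : 1 ≤ ρ := (one_le_div (by positivity)).2 (min_le_right _ _)
  have hρ6 : ρ ≤ 6 := by rw [div_le_iff₀ (by positivity)]; linarith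
  have hlog : min (log 2 ^ δ) (log 7 ^ δ) ≤ log (1 + ρ) ^ δ :=
    Real.min_rpow_le_rpow δ (Real.log_pos one_lt_two) (Real.log_le_log two_pos (by linarith))
      (Real.log_le_log (by linarith) (by linarith))
  have hre : 2 ^ e * t ^ e ≤ r ^ e := by
    rw [← Real.mul_rpow two_pos.le ht.le]
    exact Real.rpow_le_rpow_of_nonpos hr0 (by linarith) he
  have hL := Real.log_one_add_rpow_nonneg (by positivity : 0 ≤ 2 * R / t) β
  calc 2 ^ e * min (log 2 ^ δ) (log 7 ^ δ) * (t ^ (γ + e) * log (1 + 2 * R / t) ^ β)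
      = t ^ γ * (2 ^ e * t ^ e) * log (1 + 2 * R / t) ^ β * min (log 2 ^ δ) (log 7 ^ δ) := by
        rw [Real.rpow_add ht]; ring
    _ ≤ t ^ γ * r ^ e * log (1 + 2 * R / t) ^ β * log (1 + ρ) ^ δ := by
        gcongr

theorem ff_upper_bound {B ε : ℝ}
    (hB : ∀ u : ℝ, 1 ≤ u → log (1 + u) ^ δ ≤ B * u ^ ε)
    (he : -(d : ℝ) + α - q ≤ 0) (hR : 0 ≤ R) (hxd : 0 < xd) (hxt : 3 * xd ≤ 2 * t) :
    ff d α R γ β q δ ((0 : EuclideanSpace ℝ (Fin m)), xd) (z, t) ≤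
      4 ^ (-(-(d : ℝ) + α - q)) * 4 ^ |δ| * B * (t ^ (γ - ε) * log (1 + 2 * R / t) ^ β) *
        (‖z‖ + t) ^ (-(d : ℝ) + α - q + ε) := by
  have ht : 0 < t := by linarith
  have hr3 := div_three_le_nrm_sub z hxd.le hxt
  have hrz := norm_le_nrm_sub z (xd := xd) (t := t)
  have hrs := nrm_sub_le z (t := t) hxd.le (by linarith)
  simp only [ff, max_eq_right (by linarith : xd ≤ t)]
  set r := nrm (((0 : EuclideanSpace ℝ (Fin m)), xd) - (z, t))
  set e := -(d : ℝ) + α - q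
  set s := ‖z‖ + t
  set u := s / t
  set ρ := r / min t r
  have hr0 : 0 < r := by linarith
  have hs0 : 0 < s := by positivity
  have hu : 1 ≤ u := (one_le_div ht).2 (by linarith [norm_nonneg z])
  have hmin : t / 3 ≤ min t r := le_min (by linarith) hr3
  have hρ0 : 0 ≤ ρ := by positivity
  have hρ3 : ρ ≤ 3 * (r / t) := by
    rw [div_le_iff₀ (by positivity), show 3 * (r / t) * min t r = r / t * (3 * min t r) by ring]
    calc r = r / t * t := (div_mul_cancel₀ r ht.ne').symm
      _ ≤ r / t * (3 * min t r) := by gcongr; linarith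
  have hρu : ρ ≤ 4 * u := by
    have : r / t ≤ u := div_le_div_of_nonneg_right hrs ht.le
    linarith
  have huρ : u ≤ 4 * ρ := by
    have : r / t ≤ ρ := div_le_div_of_nonneg_left hr0.le (by positivity) (min_le_left _ _)
    have : u ≤ 4 * (r / t) := by
      rw [← mul_div_assoc]; exact div_le_div_of_nonneg_right (by linarith) ht.le
    linarith
  have hlog : log (1 + ρ) ^ δ ≤ 4 ^ |δ| * log (1 + u) ^ δ := by
    have hρu' : log (1 + ρ) ≤ 4 * log (1 + u) := by
      exact_mod_cast Real.log_one_add_le_nat_mul 4 (by linarith) hρ0 (by exact_mod_cast hρu)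
    have huρ' : log (1 + u) ≤ 4 * log (1 + ρ) := by
      exact_mod_cast Real.log_one_add_le_nat_mul 4 hρ0 (by linarith) (by exact_mod_cast huρ)
    exact Real.rpow_le_abs_rpow_mul_rpow δ (Real.log_pos (by linarith)) four_pos hρu' huρ'
  have hre : r ^ e ≤ 4 ^ (-e) * s ^ e := by
    rw [Real.rpow_neg four_pos.le, ← div_eq_inv_mul, ← Real.div_rpow hs0.le four_pos.le]
    exact Real.rpow_le_rpow_of_nonpos (by positivity) (by linarith) he
  have huε : u ^ ε = s ^ ε * t ^ (-ε) := by
    rw [Real.div_rpow hs0.le ht.le, Real.rpow_neg ht.le, div_eq_mul_inv]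
  have hL := Real.log_one_add_rpow_nonneg (by positivity : 0 ≤ 2 * R / t) β
  calc t ^ γ * r ^ e * log (1 + 2 * R / t) ^ β * log (1 + ρ) ^ δ
      ≤ t ^ γ * (4 ^ (-e) * s ^ e) * log (1 + 2 * R / t) ^ β * (4 ^ |δ| * (B * u ^ ε)) := by
        gcongr
        · exact Real.log_one_add_rpow_nonneg hρ0 δ
        · exact hlog.trans (by gcongr; exact hB u hu)
    _ = _ := by
        rw [huε, Real.rpow_add hs0, sub_eq_add_neg, Real.rpow_add ht]; ring

end Pointwise

section Slice

variable (m d : ℕ) (α γ β q δ : ℝ)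

theorem exists_le_lintegral_ball_ff (he : -(d : ℝ) + α - q ≤ 0) :
    ∃ c > 0, ∀ R xd t : ℝ, 0 < xd → 3 * xd ≤ 2 * t → t ≤ R →
      ENNReal.ofReal (c * (t ^ (γ + (-(d : ℝ) + α - q) + m) * log (1 + 2 * R / t) ^ β)) ≤
        ∫⁻ z in Metric.ball (0 : EuclideanSpace ℝ (Fin m)) R,
          ENNReal.ofReal (ff d α R γ β q δ ((0 : EuclideanSpace ℝ (Fin m)), xd) (z, t)) := by
  set e := -(d : ℝ) + α - q
  set A := min (log 2 ^ δ) (log 7 ^ δ)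
  obtain ⟨v, hv, hball⟩ : ∃ v > 0, volume (Metric.ball (0 : EuclideanSpace ℝ (Fin m)) 1) =
      ENNReal.ofReal v :=
    ⟨_, ENNReal.toReal_pos (Metric.measure_ball_pos volume _ one_pos).ne' measure_ball_lt_top.ne,
      (ENNReal.ofReal_toReal measure_ball_lt_top.ne).symm⟩
  have hA : 0 < A := lt_min (Real.rpow_pos_of_pos (Real.log_pos one_lt_two) δ)
    (Real.rpow_pos_of_pos (Real.log_pos (by norm_num)) δ)
  refine ⟨2 ^ e * A * v, by positivity, fun R xd t hxd hxt htR => ?_⟩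
  have ht : 0 < t := by linarith
  have hR : 0 ≤ R := by linarith
  have hk : 0 ≤ 2 ^ e * A * (t ^ (γ + e) * log (1 + 2 * R / t) ^ β) := by
    have := Real.log_one_add_rpow_nonneg (by positivity : 0 ≤ 2 * R / t) β
    positivity
  calc ENNReal.ofReal (2 ^ e * A * v * (t ^ (γ + e + m) * log (1 + 2 * R / t) ^ β))
      = ENNReal.ofReal (2 ^ e * A * (t ^ (γ + e) * log (1 + 2 * R / t) ^ β)) *
          volume (Metric.ball (0 : EuclideanSpace ℝ (Fin m)) t) := by
        rw [Measure.addHaar_ball_of_pos _ _ ht, hball, finrank_euclideanSpace_fin,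
          ← ENNReal.ofReal_mul (by positivity), ← ENNReal.ofReal_mul hk, Real.rpow_add ht,
          Real.rpow_add ht, Real.rpow_natCast]
        ring_nf
    _ = ∫⁻ _ in Metric.ball (0 : EuclideanSpace ℝ (Fin m)) t,
          ENNReal.ofReal (2 ^ e * A * (t ^ (γ + e) * log (1 + 2 * R / t) ^ β)) :=
        (setLIntegral_const _ _).symm
    _ ≤ ∫⁻ z in Metric.ball (0 : EuclideanSpace ℝ (Fin m)) t,
          ENNReal.ofReal (ff d α R γ β q δ ((0 : EuclideanSpace ℝ (Fin m)), xd) (z, t)) :=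
        setLIntegral_mono' measurableSet_ball fun z hz => ENNReal.ofReal_le_ofReal
          (ff_lower_bound z he hR hxd hxt (mem_ball_zero_iff.1 hz))
    _ ≤ _ := lintegral_mono_set (Metric.ball_subset_ball htR)

theorem exists_lintegral_ff_le (hm : (m : ℝ) + (-(d : ℝ) + α - q) < 0) :
    ∃ C, 0 ≤ C ∧ ∀ R xd t : ℝ, 0 ≤ R → 0 < xd → 3 * xd ≤ 2 * t →
      ∫⁻ z, ENNReal.ofReal (ff d α R γ β q δ ((0 : EuclideanSpace ℝ (Fin m)), xd) (z, t)) ≤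
        ENNReal.ofReal (C * (t ^ (γ + (-(d : ℝ) + α - q) + m) * log (1 + 2 * R / t) ^ β)) := by
  set e := -(d : ℝ) + α - q
  -- half of the room in `m + e < 0`, so that `(‖z‖ + t) ^ (e + ε)` is still integrable on `ℝ^m`
  set ε := -(m + e) / 2
  have hε : 0 < ε := by simp only [ε]; linarith
  have he : e ≤ 0 := by linarith [(Nat.cast_nonneg m : (0 : ℝ) ≤ m)]
  obtain ⟨B, hB0, hB⟩ := Real.exists_log_one_add_rpow_le_mul_rpow δ hε
  set J := ∫⁻ w : EuclideanSpace ℝ (Fin m), ENNReal.ofReal ((1 + ‖w‖) ^ (e + ε))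
  have hJ : J ≠ ⊤ := by
    have := finite_integral_one_add_norm (E := EuclideanSpace ℝ (Fin m)) (μ := volume)
      (r := -(e + ε)) (by rw [finrank_euclideanSpace_fin]; simp only [ε]; linarith)
    rw [neg_neg] at this
    exact this.ne
  set K := 4 ^ (-e) * 4 ^ |δ| * B
  refine ⟨K * J.toReal, by positivity, fun R xd t hR hxd hxt => ?_⟩
  have ht : 0 < t := by linarith
  have hL := Real.log_one_add_rpow_nonneg (by positivity : 0 ≤ 2 * R / t) β
  calc ∫⁻ z, ENNReal.ofReal (ff d α R γ β q δ ((0 : EuclideanSpace ℝ (Fin m)), xd) (z, t))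
      ≤ ∫⁻ z : EuclideanSpace ℝ (Fin m),
          ENNReal.ofReal (K * (t ^ (γ - ε) * log (1 + 2 * R / t) ^ β) * (‖z‖ + t) ^ (e + ε)) :=
        lintegral_mono fun z => ENNReal.ofReal_le_ofReal (ff_upper_bound z hB he hR hxd hxt)
    _ = ENNReal.ofReal (K * (t ^ (γ - ε) * log (1 + 2 * R / t) ^ β)) *
          (ENNReal.ofReal (t ^ (m + (e + ε))) * J) := by
        rw [lintegral_ofReal_const_mul _ (by positivity), lintegral_norm_add_rpow _ ht,
          finrank_euclideanSpace_fin]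
    _ = ENNReal.ofReal (K * (t ^ (γ - ε) * log (1 + 2 * R / t) ^ β) * t ^ (m + (e + ε)) *
          J.toReal) := by
        conv_rhs => rw [ENNReal.ofReal_mul (by positivity), ENNReal.ofReal_toReal hJ]
        rw [← mul_assoc, ← ENNReal.ofReal_mul (by positivity)]
    _ = _ := by
        congr 1
        rw [show γ + e + m = (γ - ε) + (m + (e + ε)) by ring, Real.rpow_add ht (γ - ε)]
        ring

end Slice

section Profile

variable {γ' β R a b : ℝ}

theorem continuousOn_rpow_mul_log_div_rpow (γ' β : ℝ) {c : ℝ} :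
    ContinuousOn (fun h : ℝ => h ^ γ' * log (c / h) ^ β) (Set.Ioo 0 c) := by
  intro h hh
  have hlog : 0 < log (c / h) := Real.log_pos ((one_lt_div hh.1).2 hh.2)
  refine (ContinuousAt.mul ?_ ?_).continuousWithinAt
  · exact Real.continuousAt_rpow_const _ _ (Or.inl hh.1.ne')
  · refine (Real.continuousAt_log (div_pos (hh.1.trans hh.2) hh.1).ne').comp
      (continuousAt_const.div continuousAt_id hh.1.ne') |>.rpow_const (Or.inl hlog.ne')

theorem Ff_sub_eq_integral (hR : 0 < R) (ha : 0 < a) (hab : a ≤ b) (hbR : b ≤ R) :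
    R ^ (γ' + 1) * (Ff γ' β (a / R) - Ff γ' β (b / R)) =
      ∫ t in a..b, t ^ γ' * log (2 * R / t) ^ β := by
  have hint : ∀ u v : ℝ, 0 < u → u ≤ v → v < 2 →
      IntervalIntegrable (fun h : ℝ => h ^ γ' * log (2 / h) ^ β) volume u v :=
    fun u v hu huv hv => ((continuousOn_rpow_mul_log_div_rpow γ' β).mono (by
      rw [Set.uIcc_of_le huv]; exact Set.Icc_subset_Ioo hu hv)).intervalIntegrable
  have haR : 0 < a / R := div_pos ha hR
  have hbR' : b / R ≤ 1 := (div_le_one hR).2 hbR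
  have habR : a / R ≤ b / R := div_le_div_of_nonneg_right hab hR.le
  have hsplit : Ff γ' β (a / R) - Ff γ' β (b / R) =
      ∫ h in (a / R)..(b / R), h ^ γ' * log (2 / h) ^ β := by
    rw [Ff, Ff, ← intervalIntegral.integral_add_adjacent_intervals
      (hint _ _ haR habR (by linarith)) (hint _ _ (haR.trans_le habR) hbR' one_lt_two)]
    ring
  have hsubst : ∀ t ∈ Set.uIcc a b, t ^ γ' * log (2 * R / t) ^ β =
      R ^ γ' * ((t / R) ^ γ' * log (2 / (t / R)) ^ β) := by
    intro t ht
    rw [Set.uIcc_of_le hab] at ht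
    rw [Real.div_rpow (ha.trans_le ht.1).le hR.le, div_div_eq_mul_div]
    field_simp
  rw [hsplit, intervalIntegral.integral_congr hsubst, intervalIntegral.integral_const_mul,
    intervalIntegral.integral_comp_div (fun h => h ^ γ' * log (2 / h) ^ β) hR.ne', smul_eq_mul,
    Real.rpow_add_one hR.ne']
  ring

theorem lintegral_Ico_eq_Ff_sub (hR : 0 < R) (ha : 0 < a) (hab : a ≤ b) (hbR : b ≤ R) :
    ∫⁻ t in Set.Ico a b, ENNReal.ofReal (t ^ γ' * log (2 * R / t) ^ β) =
      ENNReal.ofReal (R ^ (γ' + 1) * (Ff γ' β (a / R) - Ff γ' β (b / R))) := by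
  have hpos : ∀ t ∈ Set.Ioc a b, 0 ≤ t ^ γ' * log (2 * R / t) ^ β := fun t ht => by
    have ht0 : 0 < t := ha.trans ht.1
    have : 1 ≤ 2 * R / t := (one_le_div ht0).2 (by linarith [ht.2])
    exact mul_nonneg (Real.rpow_nonneg ht0.le _) (Real.rpow_nonneg (Real.log_nonneg this) _)
  have hint : IntegrableOn (fun t : ℝ => t ^ γ' * log (2 * R / t) ^ β) (Set.Ioc a b) :=
    ((continuousOn_rpow_mul_log_div_rpow γ' β).mono
      (Set.Icc_subset_Ioo ha (by linarith))).integrableOn_Icc.mono_set Set.Ioc_subset_Icc_self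
  rw [Ff_sub_eq_integral hR ha hab hbR, intervalIntegral.integral_of_le hab,
    ofReal_integral_eq_lintegral_ofReal hint
      ((ae_restrict_iff' measurableSet_Ioc).2 (Filter.Eventually.of_forall hpos)),
    setLIntegral_congr Ico_ae_eq_Ioc]

theorem two_le_two_mul_div_of_mem_Ico (ha : 0 < a) (hbR : b ≤ R) {t : ℝ}
    (ht : t ∈ Set.Ico a b) : 2 ≤ 2 * R / t := by
  have ht0 : 0 < t := ha.trans_le ht.1
  rw [le_div_iff₀ ht0]
  linarith [ht.2]

theorem ofReal_Ff_sub_le_lintegral (hβ : 0 ≤ β) (hR : 0 < R) (ha : 0 < a) (hab : a ≤ b)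
    (hbR : b ≤ R) :
    ENNReal.ofReal (R ^ (γ' + 1) * (Ff γ' β (a / R) - Ff γ' β (b / R))) ≤
      ∫⁻ t in Set.Ico a b, ENNReal.ofReal (t ^ γ' * log (1 + 2 * R / t) ^ β) := by
  rw [← lintegral_Ico_eq_Ff_sub hR ha hab hbR]
  refine setLIntegral_mono' measurableSet_Ico fun t ht => ENNReal.ofReal_le_ofReal ?_
  have hw := two_le_two_mul_div_of_mem_Ico ha hbR ht
  have := Real.rpow_nonneg (ha.trans_le ht.1).le γ'
  gcongr
  · exact Real.log_nonneg (by linarith)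
  · linarith

theorem lintegral_le_ofReal_Ff_sub (hβ : 0 ≤ β) (hR : 0 < R) (ha : 0 < a) (hab : a ≤ b)
    (hbR : b ≤ R) :
    ∫⁻ t in Set.Ico a b, ENNReal.ofReal (t ^ γ' * log (1 + 2 * R / t) ^ β) ≤
      ENNReal.ofReal (2 ^ β * (R ^ (γ' + 1) * (Ff γ' β (a / R) - Ff γ' β (b / R)))) := by
  rw [ENNReal.ofReal_mul (by positivity), ← lintegral_Ico_eq_Ff_sub hR ha hab hbR,
    ← lintegral_ofReal_const_mul _ (by positivity)]
  refine setLIntegral_mono' measurableSet_Ico fun t ht => ENNReal.ofReal_le_ofReal ?_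
  have hw := two_le_two_mul_div_of_mem_Ico ha hbR ht
  have hlog : 0 ≤ log (2 * R / t) := Real.log_nonneg (by linarith)
  have := Real.rpow_nonneg (ha.trans_le ht.1).le γ'
  calc t ^ γ' * log (1 + 2 * R / t) ^ β ≤ t ^ γ' * (2 * log (2 * R / t)) ^ β := by
        gcongr
        · exact Real.log_nonneg (by linarith)
        · exact Real.log_one_add_le_two_mul_log hw
    _ = 2 ^ β * (t ^ γ' * log (2 * R / t) ^ β) := by
        rw [Real.mul_rpow two_pos.le hlog]; ring

end Profile

theorem Dbox_sdiff_Dbox {m : ℕ} (w : EuclideanSpace ℝ (Fin m)) {a b₁ b₂ : ℝ} (hb₁ : 0 < b₁) :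
    Dbox w a b₂ \ Dbox w a b₁ = Metric.ball w a ×ˢ Set.Ico b₁ b₂ := by
  ext ⟨z, t⟩
  simp only [Dbox, Set.mem_sdiff, Set.mem_ofPred_eq, Set.mem_prod, Set.mem_Ico,
    mem_ball_iff_norm]
  constructor
  · rintro ⟨⟨hz, ht, htb⟩, hnot⟩
    exact ⟨hz, not_lt.1 fun h => hnot ⟨hz, ht, h⟩, htb⟩
  · rintro ⟨hz, htb₁, htb⟩
    exact ⟨⟨hz, hb₁.trans_le htb₁, htb⟩, fun h => (not_lt.2 htb₁) h.2.2⟩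

theorem measurable_ff {m : ℕ} (d : ℕ) (α R γ β q δ : ℝ) (x : Pt m) :
    Measurable (ff d α R γ β q δ x) := by
  unfold ff nrm
  fun_prop

theorem lintegral_Dbox_sdiff_Dbox {m : ℕ} {f : Pt m → ENNReal} (hf : Measurable f) {a b₁ b₂ : ℝ}
    (hb₁ : 0 < b₁) :
    ∫⁻ y in Dbox 0 a b₂ \ Dbox 0 a b₁, f y =
      ∫⁻ t in Set.Ico b₁ b₂, ∫⁻ z in Metric.ball (0 : EuclideanSpace ℝ (Fin m)) a, f (z, t) := by
  rw [Dbox_sdiff_Dbox 0 hb₁, Measure.volume_eq_prod, ← Measure.prod_restrict,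
    lintegral_prod_symm' _ hf]

theorem stmt_1_general (d : ℕ) (hd : 2 ≤ d) (α γ q δ β : ℝ)
    (hq : α - 1 < q) (hβ : 0 ≤ β) :
    ∃ c C : ℝ, 0 < c ∧ c ≤ C ∧
      ∀ R xd a₂ a₃ : ℝ, 0 < R → 0 < xd → xd ≤ 2 * R / 3 →
        3 * xd / 2 ≤ a₃ → a₃ ≤ a₂ → a₂ ≤ R →
        (ENNReal.ofReal (c * R ^ (γ + α - q) *
              (Ff (γ + α - q - 1) β (a₃ / R) - Ff (γ + α - q - 1) β (a₂ / R)))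
            ≤ ∫⁻ y in Dbox (0 : EuclideanSpace ℝ (Fin (d - 1))) R a₂ \
                  Dbox (0 : EuclideanSpace ℝ (Fin (d - 1))) R a₃,
                ENNReal.ofReal
                  (ff d α R γ β q δ ((0 : EuclideanSpace ℝ (Fin (d - 1))), xd) y)) ∧
        ((∫⁻ y in Dbox (0 : EuclideanSpace ℝ (Fin (d - 1))) R a₂ \
                  Dbox (0 : EuclideanSpace ℝ (Fin (d - 1))) R a₃,
                ENNReal.ofReal
                  (ff d α R γ β q δ ((0 : EuclideanSpace ℝ (Fin (d - 1))), xd) y))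
            ≤ ENNReal.ofReal (C * R ^ (γ + α - q) *
                (Ff (γ + α - q - 1) β (a₃ / R) - Ff (γ + α - q - 1) β (a₂ / R)))) := by
  have hm : ((d - 1 : ℕ) : ℝ) = d - 1 := by rw [Nat.cast_sub (by omega)]; simp
  have hd' : (2 : ℝ) ≤ d := by exact_mod_cast hd
  obtain ⟨c, hc, hlow⟩ := exists_le_lintegral_ball_ff (d - 1) d α γ β q δ (by linarith)
  obtain ⟨C, hC, hup⟩ := exists_lintegral_ff_le (d - 1) d α γ β q δ (by rw [hm]; linarith)
  have hexp : γ + (-(d : ℝ) + α - q) + ((d - 1 : ℕ) : ℝ) = γ + α - q - 1 := by rw [hm]; ring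
  rw [hexp] at hlow hup
  refine ⟨c, max c (C * 2 ^ β), hc, le_max_left _ _, fun R xd a₂ a₃ hR hxd _ ha₃ ha hR₂ => ?_⟩
  have ha₃0 : 0 < a₃ := by linarith
  rw [lintegral_Dbox_sdiff_Dbox (measurable_ff d α R γ β q δ _).ennreal_ofReal ha₃0,
    show R ^ (γ + α - q) = R ^ (γ + α - q - 1 + 1) by ring_nf, mul_assoc, mul_assoc]
  refine ⟨ofReal_mul_le_setLIntegral measurableSet_Ico hc.le
    (ofReal_Ff_sub_le_lintegral hβ hR ha₃0 ha hR₂)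
    fun t ht => hlow R xd t hxd (by linarith [ht.1]) (ht.2.le.trans hR₂), ?_⟩
  calc _ ≤ ENNReal.ofReal (C * (2 ^ β * (R ^ (γ + α - q - 1 + 1) *
          (Ff (γ + α - q - 1) β (a₃ / R) - Ff (γ + α - q - 1) β (a₂ / R))))) :=
        setLIntegral_le_ofReal_mul measurableSet_Ico hC
          (lintegral_le_ofReal_Ff_sub hβ hR ha₃0 ha hR₂) fun t ht =>
          (setLIntegral_le_lintegral _ _).trans (hup R xd t hR.le hxd (by linarith [ht.1]))
    _ ≤ _ := by
        rw [← mul_assoc]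
        exact ENNReal.ofReal_mul_le_ofReal_mul (mul_nonneg hC (by positivity)) (le_max_right _ _)

theorem stmt_1 (d : ℕ) (hd : 2 ≤ d) (α γ q δ β : ℝ)
    (hα0 : 0 < α) (hα2 : α < 2) (hq : α - 1 < q) (hβ : 0 ≤ β) :
    ∃ c C : ℝ, 0 < c ∧ c ≤ C ∧
      ∀ R xd a₂ a₃ : ℝ, 0 < R → 0 < xd → xd ≤ 2 * R / 3 →
        3 * xd / 2 ≤ a₃ → a₃ ≤ a₂ → a₂ ≤ R →
        (ENNReal.ofReal (c * R ^ (γ + α - q) *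
              (Ff (γ + α - q - 1) β (a₃ / R) - Ff (γ + α - q - 1) β (a₂ / R)))
            ≤ ∫⁻ y in Dbox (0 : EuclideanSpace ℝ (Fin (d - 1))) R a₂ \
                  Dbox (0 : EuclideanSpace ℝ (Fin (d - 1))) R a₃,
                ENNReal.ofReal
                  (ff d α R γ β q δ ((0 : EuclideanSpace ℝ (Fin (d - 1))), xd) y)) ∧
        ((∫⁻ y in Dbox (0 : EuclideanSpace ℝ (Fin (d - 1))) R a₂ \
                  Dbox (0 : EuclideanSpace ℝ (Fin (d - 1))) R a₃,
                ENNReal.ofReal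
                  (ff d α R γ β q δ ((0 : EuclideanSpace ℝ (Fin (d - 1))), xd) y))
            ≤ ENNReal.ofReal (C * R ^ (γ + α - q) *
                (Ff (γ + α - q - 1) β (a₃ / R) - Ff (γ + α - q - 1) β (a₂ / R)))) :=
  stmt_1_general d hd α γ q δ β hq hβ

end
end

section
/- Let d ≥ 2, 0 < α < 2, γ ≤ −1, q > α − 1, δ ∈ ℝ and β ≥ 0. Then for every R > 0, every point x = (0̃, x_d) with 0 < x_d ≤ 2R/3, and every a₁ with 0 < a₁ ≤ x_d/2, the integral ∫_{D(R,a₁)} f(y; γ, β, q, δ, x) dy is infinite. -/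
open MeasureTheory Real

noncomputable section

/-!
On `D(R, a₁)` the distance `|x - y|` lies between `x_d / 2` and `R + x_d`, so the kernel
`|x - y|^(-d+α-q)` and the second logarithm are bounded below by positive constants (whatever the
signs of the exponents), and the first logarithm is at least `log (1 + 2R/a₁) > 0`, which survives
the power `β ≥ 0`. Hence `f ≥ c · y_d^γ` on the box, and `∫₀^{a₁} y_d^γ dy_d = ∞` for `γ ≤ -1`.
-/

lemma Real.min_rpow_le_rpow_of_mem_Icc {a b t : ℝ} (s : ℝ) (ha : 0 < a) (hat : a ≤ t)
    (htb : t ≤ b) :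
    min (a ^ s) (b ^ s) ≤ t ^ s := by
  rcases le_total 0 s with hs | hs
  · exact (min_le_left _ _).trans (Real.rpow_le_rpow ha.le hat hs)
  · exact (min_le_right _ _).trans (Real.rpow_le_rpow_of_nonpos (ha.trans_le hat) htb hs)

lemma lintegral_Ioo_ofReal_mul_rpow_eq_top {γ a c : ℝ} (hγ : γ ≤ -1) (ha : 0 < a) (hc : 0 < c) :
    ∫⁻ t in Set.Ioo (0 : ℝ) a, ENNReal.ofReal (c * t ^ γ) = ⊤ := by
  by_contra h
  have hint : IntegrableOn (fun t : ℝ => c * t ^ γ) (Set.Ioo 0 a) := by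
    refine (lintegral_ofReal_ne_top_iff_integrable ?_ ?_).mp h
    · exact ((measurable_id.pow_const γ).const_mul c).aestronglyMeasurable
    · filter_upwards [ae_restrict_mem measurableSet_Ioo] with t ht
      exact mul_nonneg hc.le (Real.rpow_nonneg ht.1.le γ)
  have hrpow : IntegrableOn (fun t : ℝ => t ^ γ) (Set.Ioo 0 a) := by
    simpa [IntegrableOn, ← mul_assoc, inv_mul_cancel₀ hc.ne'] using hint.const_mul c⁻¹
  rw [intervalIntegral.integrableOn_Ioo_rpow_iff ha] at hrpow
  linarith

lemma lintegral_prod_Ioo_ofReal_mul_rpow_eq_top {E : Type*} [MeasureSpace E]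
    [SFinite (volume : Measure E)] {s : Set E} (hs : volume s ≠ 0)
    {γ a c : ℝ} (hγ : γ ≤ -1) (ha : 0 < a) (hc : 0 < c) :
    ∫⁻ y in s ×ˢ Set.Ioo (0 : ℝ) a, ENNReal.ofReal (c * y.2 ^ γ) = ⊤ := by
  rw [Measure.volume_eq_prod, ← Measure.prod_restrict,
    lintegral_prod _ ((measurable_snd.pow_const γ).const_mul c).ennreal_ofReal.aemeasurable]
  simp only [lintegral_Ioo_ofReal_mul_rpow_eq_top hγ ha hc, lintegral_const,
    Measure.restrict_apply_univ, ENNReal.top_mul hs]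

lemma Dbox_zero_eq_ball_prod {m : ℕ} (R a : ℝ) :
    Dbox (0 : EuclideanSpace ℝ (Fin m)) R a = Metric.ball 0 R ×ˢ Set.Ioo 0 a := by
  ext y
  simp [Dbox, Metric.mem_ball, dist_eq_norm]

lemma nrm_sub_mem_Icc_of_mem_Dbox {m : ℕ} {R xd a : ℝ} (hxd : 0 < xd) (haxd : a ≤ xd / 2)
    {y : Pt m} (hy : y ∈ Dbox 0 R a) :
    xd / 2 ≤ nrm (((0 : EuclideanSpace ℝ (Fin m)), xd) - y) ∧
      nrm (((0 : EuclideanSpace ℝ (Fin m)), xd) - y) ≤ R + xd := by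
  obtain ⟨hy1, hy2, hy3⟩ := hy
  rw [sub_zero] at hy1
  have hn : nrm (((0 : EuclideanSpace ℝ (Fin m)), xd) - y) =
      √(‖y.1‖ ^ 2 + (xd - y.2) ^ 2) := by
    simp [nrm]
  rw [hn]
  constructor
  · refine Real.le_sqrt_of_sq_le ?_
    nlinarith [sq_nonneg ‖y.1‖]
  · refine Real.sqrt_le_iff.mpr ⟨by linarith [norm_nonneg y.1], ?_⟩
    nlinarith [norm_nonneg y.1]

lemma exists_pos_mul_rpow_le_ff {m : ℕ} (d : ℕ) (α γ q δ : ℝ) {β R xd a : ℝ} (hβ : 0 ≤ β)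
    (hR : 0 < R) (hxd : 0 < xd) (ha : 0 < a) (haxd : a ≤ xd / 2) :
    ∃ c > 0, ∀ y ∈ Dbox (0 : EuclideanSpace ℝ (Fin m)) R a,
      c * y.2 ^ γ ≤ ff d α R γ β q δ ((0 : EuclideanSpace ℝ (Fin m)), xd) y := by
  set e : ℝ := -(d : ℝ) + α - q
  set U : ℝ := 1 + (R + xd) / (xd / 2) with hU
  have hLa : 0 < Real.log (1 + 2 * R / a) :=
    Real.log_pos (by linarith [div_pos (mul_pos two_pos hR) ha])
  have hLU : 0 < Real.log U :=
    Real.log_pos (by rw [hU]; linarith [div_pos (by linarith : 0 < R + xd) (half_pos hxd)])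
  refine ⟨min ((xd / 2) ^ e) ((R + xd) ^ e) * Real.log (1 + 2 * R / a) ^ β *
    min (Real.log 2 ^ δ) (Real.log U ^ δ), by positivity, ?_⟩
  intro y hy
  obtain ⟨hn_lo, hn_hi⟩ := nrm_sub_mem_Icc_of_mem_Dbox hxd haxd hy
  obtain ⟨-, hy2, hy3⟩ := hy
  set n := nrm (((0 : EuclideanSpace ℝ (Fin m)), xd) - y)
  set M := min (max xd y.2) n
  have hM_lo : xd / 2 ≤ M := le_min (by linarith [le_max_left xd y.2]) hn_lo
  have hkernel := Real.min_rpow_le_rpow_of_mem_Icc e (half_pos hxd) hn_lo hn_hi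
  have hlog₁ : Real.log (1 + 2 * R / a) ^ β ≤ Real.log (1 + 2 * R / y.2) ^ β := by
    have : 2 * R / a ≤ 2 * R / y.2 := div_le_div_of_nonneg_left (by linarith) hy2 hy3.le
    gcongr
  have hlog₂ : min (Real.log 2 ^ δ) (Real.log U ^ δ) ≤ Real.log (1 + n / M) ^ δ := by
    have hMpos : 0 < M := by linarith
    refine Real.min_rpow_le_rpow_of_mem_Icc δ (Real.log_pos one_lt_two) ?_ ?_
    · have : 1 ≤ n / M := (one_le_div hMpos).mpr (min_le_right _ _)
      exact Real.log_le_log two_pos (by linarith)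
    · have : n / M ≤ (R + xd) / (xd / 2) := div_le_div₀ (by linarith) hn_hi (half_pos hxd) hM_lo
      have : 0 ≤ n / M := div_nonneg (by linarith) hMpos.le
      exact Real.log_le_log (by linarith) (by rw [hU]; linarith)
  have hL₁ : 0 ≤ Real.log (1 + 2 * R / y.2) :=
    Real.log_nonneg (by linarith [div_pos (mul_pos two_pos hR) hy2])
  have hn : 0 < n := by linarith
  calc _ = y.2 ^ γ * min ((xd / 2) ^ e) ((R + xd) ^ e) * Real.log (1 + 2 * R / a) ^ β *
        min (Real.log 2 ^ δ) (Real.log U ^ δ) := by ring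
    _ ≤ y.2 ^ γ * n ^ e * Real.log (1 + 2 * R / y.2) ^ β * Real.log (1 + n / M) ^ δ := by
        gcongr
    _ = _ := rfl

theorem stmt_3_general (d : ℕ) (α γ q δ β : ℝ)
    (hγ : γ ≤ -1) (hβ : 0 ≤ β) :
    ∀ R xd a₁ : ℝ, 0 < R → 0 < xd → xd ≤ 2 * R / 3 → 0 < a₁ → a₁ ≤ xd / 2 →
      (∫⁻ y in Dbox (0 : EuclideanSpace ℝ (Fin (d - 1))) R a₁,
          ENNReal.ofReal (ff d α R γ β q δ ((0 : EuclideanSpace ℝ (Fin (d - 1))), xd) y))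
        = ⊤ := by
  intro R xd a₁ hR hxd _ ha₁ ha₁xd
  obtain ⟨c, hc, hle⟩ :=
    exists_pos_mul_rpow_le_ff (m := d - 1) d α γ q δ hβ hR hxd ha₁ ha₁xd
  have hbox := Dbox_zero_eq_ball_prod (m := d - 1) R a₁
  refine eq_top_iff.mpr ?_
  calc ⊤ = ∫⁻ y in Dbox 0 R a₁, ENNReal.ofReal (c * y.2 ^ γ) := by
        rw [hbox, lintegral_prod_Ioo_ofReal_mul_rpow_eq_top
          (Metric.measure_ball_pos volume 0 hR).ne' hγ ha₁ hc]
    _ ≤ _ := by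
        refine setLIntegral_mono' ?_ fun y hy ↦ ENNReal.ofReal_le_ofReal (hle y hy)
        exact hbox ▸ measurableSet_ball.prod measurableSet_Ioo

theorem stmt_3 (d : ℕ) (hd : 2 ≤ d) (α γ q δ β : ℝ)
    (hα0 : 0 < α) (hα2 : α < 2) (hγ : γ ≤ -1) (hq : α - 1 < q) (hβ : 0 ≤ β) :
    ∀ R xd a₁ : ℝ, 0 < R → 0 < xd → xd ≤ 2 * R / 3 → 0 < a₁ → a₁ ≤ xd / 2 →
      (∫⁻ y in Dbox (0 : EuclideanSpace ℝ (Fin (d - 1))) R a₁,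
          ENNReal.ofReal (ff d α R γ β q δ ((0 : EuclideanSpace ℝ (Fin (d - 1))), xd) y))
        = ⊤ :=
  stmt_3_general d α γ q δ β hγ hβ

end
end

section
/- Let 0 < α < 2 and β₁, β₂ ≥ 0. There exist constants c₂, c₃ > 0, depending only on α, β₁, β₂, such that c₂ (R/r)^α ≤ Φ(R)/Φ(r) ≤ c₃ (R/r)^{β̄} for all 0 < r ≤ R < ∞. -/
/-!
Write `I(r) = ∫₀^r s/φ(s) ds`, so that `Φ(R)/Φ(r) = (R/r)² · I(r)/I(R)`. On `(0, ∞)` the function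
`s^α/φ(s) = min 1 (s^{-(β₁+β₂)})` is nonincreasing and `s^{α+β₁+β₂}/φ(s) = min (s^{β₁+β₂}) 1` is
nondecreasing. Substituting `s = (R/r) t` in `I(R)` therefore gives
`(R/r)^{2-α-β₁-β₂} I(r) ≤ I(R) ≤ (R/r)^{2-α} I(r)`, and `I(r) ≤ I(R)` trivially. Both bounds hold
with `c₂ = c₃ = 1`.
-/

open MeasureTheory Real

noncomputable section

/-- `φ(r) = r^α` for `0 < r < 1` and `φ(r) = r^{α+β₁+β₂}` for `r ≥ 1`. -/
noncomputable def phi (α β₁ β₂ r : ℝ) : ℝ :=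
  if r < 1 then r ^ α else r ^ (α + β₁ + β₂)

/-- `Φ(r) = r² / ∫₀^r (s/φ(s)) ds`. -/
noncomputable def Phi (α β₁ β₂ r : ℝ) : ℝ :=
  r ^ 2 / ∫ s in (0 : ℝ)..r, s / phi α β₁ β₂ s

open Set

section Scaling

variable {f : ℝ → ℝ} {p r R : ℝ}

theorem integral_zero_le_div_rpow_mul_of_antitoneOn (hr : 0 < r) (hrR : r ≤ R)
    (hf : IntervalIntegrable f volume 0 R) (hanti : AntitoneOn (fun s ↦ s ^ p * f s) (Ioi 0)) :
    ∫ s in 0..R, f s ≤ (R / r) ^ (1 - p) * ∫ s in 0..r, f s := by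
  set c := R / r
  have hc : 0 < c := div_pos (hr.trans_le hrR) hr
  have hc1 : 1 ≤ c := (one_le_div hr).2 hrR
  have hcr : c * r = R := div_mul_cancel₀ R hr.ne'
  have hscale : ∫ s in 0..R, f s = c * ∫ t in 0..r, f (c * t) := by
    rw [intervalIntegral.integral_comp_mul_left f hc.ne', mul_zero, hcr, smul_eq_mul,
      mul_inv_cancel_left₀ hc.ne']
  have hfr : IntervalIntegrable f volume 0 r :=
    hf.mono_set (uIcc_subset_uIcc_left (mem_uIcc_of_le hr.le hrR))
  have hfc : IntervalIntegrable (fun t ↦ f (c * t)) volume 0 r := by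
    have h := hf.comp_mul_left (c := c)
    rwa [zero_div, div_div_cancel₀ (hr.trans_le hrR).ne'] at h
  have hpoint : ∀ t ∈ Ioo 0 r, f (c * t) ≤ c ^ (-p) * f t := by
    intro t ht
    have hct : (c * t) ^ p * f (c * t) ≤ t ^ p * f t :=
      hanti ht.1 (mul_pos hc ht.1) (le_mul_of_one_le_left ht.1.le hc1)
    rw [mul_rpow hc.le ht.1.le, mul_assoc] at hct
    rw [rpow_neg hc.le, inv_mul_eq_div, le_div_iff₀' (rpow_pos_of_pos hc p)]
    exact le_of_mul_le_mul_left (by linarith) (rpow_pos_of_pos ht.1 p)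
  calc ∫ s in 0..R, f s = c * ∫ t in 0..r, f (c * t) := hscale
    _ ≤ c * ∫ t in 0..r, c ^ (-p) * f t := by
      gcongr
      exact intervalIntegral.integral_mono_on_of_le_Ioo hr.le hfc (hfr.const_mul _) hpoint
    _ = c ^ (1 - p) * ∫ s in 0..r, f s := by
      rw [intervalIntegral.integral_const_mul, ← mul_assoc, sub_eq_add_neg, rpow_add hc, rpow_one]

theorem div_rpow_mul_integral_zero_le_of_monotoneOn (hr : 0 < r) (hrR : r ≤ R)
    (hf : IntervalIntegrable f volume 0 R) (hmono : MonotoneOn (fun s ↦ s ^ p * f s) (Ioi 0)) :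
    (R / r) ^ (1 - p) * ∫ s in 0..r, f s ≤ ∫ s in 0..R, f s := by
  have h := integral_zero_le_div_rpow_mul_of_antitoneOn hr hrR hf.neg
    (f := fun s ↦ -f s) (by simpa only [mul_neg] using hmono.neg)
  simpa only [intervalIntegral.integral_neg, mul_neg, neg_le_neg_iff] using h

end Scaling

section PhiBounds

variable {α β₁ β₂ : ℝ}

theorem phi_pos {s : ℝ} (hs : 0 < s) : 0 < phi α β₁ β₂ s := by
  unfold phi
  split_ifs <;> positivity

theorem measurable_phi : Measurable (phi α β₁ β₂) :=
  Measurable.ite measurableSet_Iio (measurable_id.pow_const _) (measurable_id.pow_const _)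

theorem rpow_mul_div_phi (hβ : 0 ≤ β₁ + β₂) (t : ℝ) {s : ℝ} (hs : 0 < s) :
    s ^ (α + t - 1) * (s / phi α β₁ β₂ s) = min (s ^ t) (s ^ (t - (β₁ + β₂))) := by
  unfold phi
  rw [← mul_div_assoc, ← rpow_add_one hs.ne']
  split_ifs with h <;> rw [← rpow_sub hs]
  · rw [min_eq_left (rpow_le_rpow_of_exponent_ge hs h.le (by linarith))]
    ring_nf
  · rw [min_eq_right (rpow_le_rpow_of_exponent_le (not_lt.1 h) (by linarith))]
    ring_nf

theorem antitoneOn_rpow_mul_div_phi (hβ : 0 ≤ β₁ + β₂) :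
    AntitoneOn (fun s ↦ s ^ (α - 1) * (s / phi α β₁ β₂ s)) (Ioi 0) := by
  intro a ha b hb hab
  simp only
  rw [show α - 1 = α + 0 - 1 by ring, rpow_mul_div_phi hβ 0 ha, rpow_mul_div_phi hβ 0 hb]
  exact min_le_min (by simp) (rpow_le_rpow_of_nonpos ha hab (by linarith))

theorem monotoneOn_rpow_mul_div_phi (hβ : 0 ≤ β₁ + β₂) :
    MonotoneOn (fun s ↦ s ^ (α + β₁ + β₂ - 1) * (s / phi α β₁ β₂ s)) (Ioi 0) := by
  intro a ha b hb hab
  simp only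
  rw [add_assoc α, rpow_mul_div_phi hβ _ ha, rpow_mul_div_phi hβ _ hb, sub_self]
  exact min_le_min (rpow_le_rpow (le_of_lt ha) hab hβ) (by simp)

theorem intervalIntegrable_div_phi (hα : α < 2) (hβ : 0 ≤ β₁ + β₂) {R : ℝ} (hR : 0 ≤ R) :
    IntervalIntegrable (fun s ↦ s / phi α β₁ β₂ s) volume 0 R := by
  refine (intervalIntegral.intervalIntegrable_rpow' (r := 1 - α) (by linarith)).mono_fun'
    (measurable_id.div measurable_phi).aestronglyMeasurable ?_
  rw [uIoc_of_le hR]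
  refine ae_restrict_of_forall_mem measurableSet_Ioc fun s hs ↦ ?_
  have hs0 : 0 < s := hs.1
  have hbound : s ^ (α + 0 - 1) * (s / phi α β₁ β₂ s) ≤ 1 := by
    rw [rpow_mul_div_phi hβ 0 hs0, rpow_zero]
    exact min_le_left _ _
  calc ‖s / phi α β₁ β₂ s‖ = s ^ (1 - α) * (s ^ (α + 0 - 1) * (s / phi α β₁ β₂ s)) := by
        rw [norm_of_nonneg (div_pos hs0 (phi_pos hs0)).le, ← mul_assoc, ← rpow_add hs0,
          show 1 - α + (α + 0 - 1) = 0 by ring, rpow_zero, one_mul]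
    _ ≤ s ^ (1 - α) := mul_le_of_le_one_right (by positivity) hbound

theorem integral_div_phi_pos (hα : α < 2) (hβ : 0 ≤ β₁ + β₂) {r : ℝ} (hr : 0 < r) :
    0 < ∫ s in 0..r, s / phi α β₁ β₂ s :=
  intervalIntegral.intervalIntegral_pos_of_pos_on (intervalIntegrable_div_phi hα hβ hr.le)
    (fun _ hs ↦ div_pos hs.1 (phi_pos hs.1)) hr

theorem Phi_div_Phi (hα : α < 2) (hβ : 0 ≤ β₁ + β₂) {r R : ℝ} (hr : 0 < r) (hR : 0 < R) :
    Phi α β₁ β₂ R / Phi α β₁ β₂ r = (R / r) ^ (2 : ℝ) /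
      ((∫ s in 0..R, s / phi α β₁ β₂ s) / ∫ s in 0..r, s / phi α β₁ β₂ s) := by
  have := integral_div_phi_pos hα hβ hr
  have := integral_div_phi_pos hα hβ hR
  unfold Phi
  rw [rpow_two, div_pow]
  field_simp

theorem integral_div_phi_le (hα : α < 2) (hβ : 0 ≤ β₁ + β₂) {r R : ℝ} (hr : 0 < r)
    (hrR : r ≤ R) :
    ∫ s in 0..R, s / phi α β₁ β₂ s ≤ (R / r) ^ (2 - α) * ∫ s in 0..r, s / phi α β₁ β₂ s := by
  have h := integral_zero_le_div_rpow_mul_of_antitoneOn hr hrR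
    (intervalIntegrable_div_phi hα hβ (hr.le.trans hrR)) (antitoneOn_rpow_mul_div_phi hβ)
  rwa [show 1 - (α - 1) = 2 - α by ring] at h

theorem rpow_mul_integral_div_phi_le (hα : α < 2) (hβ : 0 ≤ β₁ + β₂) {r R : ℝ} (hr : 0 < r)
    (hrR : r ≤ R) :
    (R / r) ^ (2 - min (α + β₁ + β₂) 2) * ∫ s in 0..r, s / phi α β₁ β₂ s ≤
      ∫ s in 0..R, s / phi α β₁ β₂ s := by
  have hint := intervalIntegrable_div_phi hα hβ (hr.le.trans hrR)
  rcases le_total (α + β₁ + β₂) 2 with hγ | hγ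
  · have h := div_rpow_mul_integral_zero_le_of_monotoneOn hr hrR hint
      (monotoneOn_rpow_mul_div_phi hβ)
    rw [min_eq_left hγ]
    rwa [show 1 - (α + β₁ + β₂ - 1) = 2 - (α + β₁ + β₂) by ring] at h
  · rw [min_eq_right hγ, sub_self, rpow_zero, one_mul]
    refine intervalIntegral.integral_mono_interval le_rfl hr.le hrR ?_ hint
    filter_upwards [ae_restrict_mem measurableSet_Ioc] with s hs
    exact (div_pos hs.1 (phi_pos hs.1)).le

end PhiBounds

theorem stmt_11_general (α β₁ β₂ : ℝ) (hα2 : α < 2)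
    (hβ₁ : 0 ≤ β₁) (hβ₂ : 0 ≤ β₂) :
    ∃ c₂ c₃ : ℝ, 0 < c₂ ∧ 0 < c₃ ∧
      ∀ r R : ℝ, 0 < r → r ≤ R →
        c₂ * (R / r) ^ α ≤ Phi α β₁ β₂ R / Phi α β₁ β₂ r ∧
        Phi α β₁ β₂ R / Phi α β₁ β₂ r ≤ c₃ * (R / r) ^ (min (α + β₁ + β₂) 2) := by
  have hβ : 0 ≤ β₁ + β₂ := add_nonneg hβ₁ hβ₂
  refine ⟨1, 1, one_pos, one_pos, fun r R hr hrR ↦ ?_⟩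
  have hR : 0 < R := hr.trans_le hrR
  have hc : 0 < R / r := div_pos hR hr
  have hIr := integral_div_phi_pos hα2 hβ hr
  have hIR := integral_div_phi_pos hα2 hβ hR
  rw [Phi_div_Phi hα2 hβ hr hR, one_mul, one_mul]
  constructor
  · rw [le_div_iff₀ (div_pos hIR hIr)]
    calc (R / r) ^ α * ((∫ s in 0..R, s / phi α β₁ β₂ s) / ∫ s in 0..r, s / phi α β₁ β₂ s)
        ≤ (R / r) ^ α * (R / r) ^ (2 - α) := by
          gcongr
          exact (div_le_iff₀ hIr).2 (integral_div_phi_le hα2 hβ hr hrR)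
      _ = (R / r) ^ (2 : ℝ) := by rw [← rpow_add hc, add_sub_cancel]
  · set m := min (α + β₁ + β₂) 2
    rw [div_le_iff₀ (div_pos hIR hIr)]
    calc (R / r) ^ (2 : ℝ) = (R / r) ^ m * (R / r) ^ (2 - m) := by
          rw [← rpow_add hc, add_sub_cancel]
      _ ≤ (R / r) ^ m * ((∫ s in 0..R, s / phi α β₁ β₂ s) / ∫ s in 0..r, s / phi α β₁ β₂ s) := by
          gcongr
          exact (le_div_iff₀ hIr).2 (rpow_mul_integral_div_phi_le hα2 hβ hr hrR)

theorem stmt_11 (α β₁ β₂ : ℝ) (hα0 : 0 < α) (hα2 : α < 2)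
    (hβ₁ : 0 ≤ β₁) (hβ₂ : 0 ≤ β₂) :
    ∃ c₂ c₃ : ℝ, 0 < c₂ ∧ 0 < c₃ ∧
      ∀ r R : ℝ, 0 < r → r ≤ R →
        c₂ * (R / r) ^ α ≤ Phi α β₁ β₂ R / Phi α β₁ β₂ r ∧
        Phi α β₁ β₂ R / Phi α β₁ β₂ r ≤ c₃ * (R / r) ^ (min (α + β₁ + β₂) 2) :=
  stmt_11_general α β₁ β₂ hα2 hβ₁ hβ₂

end
end

section
/- Let d ≥ 2 and let β₁ > β₂ ≥ 0 and β₃, β₄ ≥ 0. There exists a constant c > 0, depending only on d, β₁, β₂, β₃, β₄, such that for every z₀ ∈ ∂ℝ^d_+, every η ∈ (0, 1/4], and every z ∈ ℝ^d_+ with 0 < z_d ≤ 1/8, one has ∫_{ℝ^d_+ ∩ B(z₀, η)} (z_d ∨ y_d)^{−(β₁−β₂)} (log(1 + (z_d ∨ y_d)/(z_d ∧ y_d)))^{β₃} (log(1/(z_d ∨ y_d)))^{β₄} dy ≤ c · z_d^{−(β₁−β₂)} ∫_{ℝ^d_+ ∩ B(z₀, η)} |log y_d|^{β₃+β₄} dy.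 -/
open MeasureTheory Real

noncomputable section

/-!
The estimate holds pointwise in `y`, so it suffices to bound the integrand by
`c z_d^{-α} |log y_d|^{β₃+β₄}` with `α = β₁ - β₂ > 0`; on the half ball, `0 < y_d < 1/4`, so
`|log y_d| ≥ log 4 ≥ 1`. If `y_d ≤ z_d`, then `log(1 + z_d/y_d) ≤ log(2/y_d) ≤ 2|log y_d|` and
`log(1/z_d) ≤ |log y_d|`. If `z_d < y_d`, put `t = y_d/z_d ≥ 1`: then
`y_d^{-α} log(1 + t)^{β₃} = z_d^{-α} · t^{-α} log(1 + t)^{β₃}`, and the power decay of `t^{-α}`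
beats the logarithm uniformly in `t ≥ 1`.
-/

lemma abs_snd_le_nrm {m : ℕ} (x : Pt m) : |x.2| ≤ nrm x := by
  rw [nrm, ← Real.sqrt_sq_eq_abs]
  exact Real.sqrt_le_sqrt (le_add_of_nonneg_left (by positivity))

lemma continuous_nrm {m : ℕ} : Continuous (nrm : Pt m → ℝ) := by
  unfold nrm
  fun_prop

lemma one_le_abs_log_of_le_quarter {y : ℝ} (hy : 0 < y) (hy4 : y ≤ 1 / 4) : 1 ≤ |Real.log y| := by
  have hlog4 : 1 ≤ Real.log 4 := by
    rw [Real.le_log_iff_exp_le (by norm_num)]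
    linarith [Real.exp_one_lt_d9]
  rw [← abs_neg, ← Real.log_inv, abs_of_nonneg (Real.log_nonneg (by rw [one_le_inv₀ hy]; linarith))]
  exact hlog4.trans (Real.log_le_log (by norm_num) (by rw [le_inv_comm₀ (by norm_num) hy]; linarith))

lemma exists_rpow_neg_mul_log_one_add_rpow_le {α β : ℝ} (hα : 0 < α) (hβ : 0 ≤ β) :
    ∃ C : ℝ, 0 < C ∧ ∀ t : ℝ, 1 ≤ t → t ^ (-α) * Real.log (1 + t) ^ β ≤ C := by
  -- `log s ≤ s^ε / ε`, with `ε` chosen so that `ε β ≤ α`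
  set ε := α / (β + 1)
  have hε : 0 < ε := by positivity
  have hεβ : ε * β ≤ α := by
    rw [div_mul_eq_mul_div, div_le_iff₀ (by linarith)]
    nlinarith
  refine ⟨(2 : ℝ) ^ (ε * β) / ε ^ β, by positivity, fun t ht => ?_⟩
  have ht0 : 0 < t := one_pos.trans_le ht
  have hlog : Real.log (1 + t) ^ β ≤ ((2 * t) ^ ε / ε) ^ β :=
    Real.rpow_le_rpow (Real.log_nonneg (by linarith))
      ((Real.log_le_log (by linarith) (by linarith)).trans
        (Real.log_le_rpow_div (by linarith) hε)) hβ
  have hdecay : t ^ (-α) * t ^ (ε * β) ≤ 1 := by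
    rw [← Real.rpow_add ht0]
    exact Real.rpow_le_one_of_one_le_of_nonpos ht (by linarith)
  calc t ^ (-α) * Real.log (1 + t) ^ β ≤ t ^ (-α) * ((2 * t) ^ ε / ε) ^ β := by gcongr
    _ = (t ^ (-α) * t ^ (ε * β)) * ((2 : ℝ) ^ (ε * β) / ε ^ β) := by
        rw [Real.div_rpow (by positivity) hε.le, ← Real.rpow_mul (by positivity),
          Real.mul_rpow (by norm_num) ht0.le]
        ring
    _ ≤ (2 : ℝ) ^ (ε * β) / ε ^ β := mul_le_of_le_one_left (by positivity) hdecay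

section KernelBound

variable {α β₃ β₄ z y : ℝ}

lemma kernel_le_of_le (hβ₃ : 0 ≤ β₃) (hβ₄ : 0 ≤ β₄) (hy : 0 < y) (hy4 : y ≤ 1 / 4)
    (hyz : y ≤ z) (hz1 : z ≤ 1) :
    z ^ (-α) * Real.log (1 + z / y) ^ β₃ * Real.log (1 / z) ^ β₄ ≤
      2 ^ β₃ * z ^ (-α) * |Real.log y| ^ (β₃ + β₄) := by
  have hz : 0 < z := hy.trans_le hyz
  have hL : 1 ≤ |Real.log y| := one_le_abs_log_of_le_quarter hy hy4
  have hLy : |Real.log y| = Real.log (1 / y) := by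
    rw [one_div, Real.log_inv, abs_of_nonpos (Real.log_nonpos hy.le (by linarith))]
  have hzy : 1 ≤ z / y := (one_le_div hy).mpr hyz
  have hlog2 : Real.log 2 ≤ |Real.log y| := by linarith [Real.log_two_lt_d9]
  have hratio : Real.log (1 + z / y) ≤ 2 * |Real.log y| := by
    have : Real.log (1 + z / y) ≤ Real.log 2 + Real.log z - Real.log y := by
      rw [← Real.log_mul (by norm_num) hz.ne', ← Real.log_div (by positivity) hy.ne']
      exact Real.log_le_log (by positivity) (by rw [mul_div_assoc]; linarith)
    linarith [Real.log_nonpos hz.le hz1, neg_le_abs (Real.log y)]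
  have hlogz : Real.log (1 / z) ≤ |Real.log y| := by
    rw [hLy]
    exact Real.log_le_log (by positivity) (one_div_le_one_div_of_le hy hyz)
  have hratio0 : 0 ≤ Real.log (1 + z / y) := Real.log_nonneg (by linarith)
  have hlogz0 : 0 ≤ Real.log (1 / z) := Real.log_nonneg (by rw [le_div_iff₀ hz]; linarith)
  calc z ^ (-α) * Real.log (1 + z / y) ^ β₃ * Real.log (1 / z) ^ β₄
      ≤ z ^ (-α) * (2 * |Real.log y|) ^ β₃ * |Real.log y| ^ β₄ := by gcongr
    _ = 2 ^ β₃ * z ^ (-α) * |Real.log y| ^ (β₃ + β₄) := by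
        rw [Real.mul_rpow (by norm_num) (by positivity), Real.rpow_add (by positivity)]
        ring

lemma kernel_le_of_lt {C : ℝ} (hC : ∀ t : ℝ, 1 ≤ t → t ^ (-α) * Real.log (1 + t) ^ β₃ ≤ C)
    (hβ₃ : 0 ≤ β₃) (hz : 0 < z) (hzy : z < y) (hy4 : y ≤ 1 / 4) :
    y ^ (-α) * Real.log (1 + y / z) ^ β₃ * Real.log (1 / y) ^ β₄ ≤
      C * z ^ (-α) * |Real.log y| ^ (β₃ + β₄) := by
  have hy : 0 < y := hz.trans hzy
  have hL : 1 ≤ |Real.log y| := one_le_abs_log_of_le_quarter hy hy4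
  have hLy : Real.log (1 / y) = |Real.log y| := by
    rw [one_div, Real.log_inv, abs_of_nonpos (Real.log_nonpos hy.le (by linarith))]
  have hC0 : 0 ≤ C := by
    refine le_trans ?_ (hC 1 le_rfl)
    exact mul_nonneg (by positivity) (Real.rpow_nonneg (Real.log_nonneg (by norm_num)) _)
  have ht : 1 ≤ y / z := (one_le_div hz).mpr hzy.le
  have hscale : y ^ (-α) * Real.log (1 + y / z) ^ β₃ =
      z ^ (-α) * ((y / z) ^ (-α) * Real.log (1 + y / z) ^ β₃) := by
    rw [Real.div_rpow hy.le hz.le]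
    field_simp
  calc y ^ (-α) * Real.log (1 + y / z) ^ β₃ * Real.log (1 / y) ^ β₄
      ≤ z ^ (-α) * C * |Real.log y| ^ (β₃ + β₄) := by
        rw [hscale, hLy]
        gcongr
        · exact hC _ ht
        · linarith
    _ = C * z ^ (-α) * |Real.log y| ^ (β₃ + β₄) := by ring

lemma exists_kernel_le (hα : 0 < α) (hβ₃ : 0 ≤ β₃) (hβ₄ : 0 ≤ β₄) :
    ∃ C : ℝ, 0 < C ∧ ∀ z y : ℝ, 0 < z → z ≤ 1 → 0 < y → y ≤ 1 / 4 →
      max z y ^ (-α) * Real.log (1 + max z y / min z y) ^ β₃ * Real.log (1 / max z y) ^ β₄ ≤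
        C * z ^ (-α) * |Real.log y| ^ (β₃ + β₄) := by
  obtain ⟨C, hC0, hC⟩ := exists_rpow_neg_mul_log_one_add_rpow_le hα hβ₃
  refine ⟨2 ^ β₃ + C, by positivity, fun z y hz hz1 hy hy4 => ?_⟩
  rcases le_or_gt y z with hyz | hzy
  · rw [max_eq_left hyz, min_eq_right hyz]
    refine (kernel_le_of_le hβ₃ hβ₄ hy hy4 hyz hz1).trans ?_
    gcongr
    linarith
  · rw [max_eq_right hzy.le, min_eq_left hzy.le]
    refine (kernel_le_of_lt hC hβ₃ hz hzy hy4).trans ?_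
    gcongr
    linarith [Real.rpow_pos_of_pos (two_pos : (0 : ℝ) < 2) β₃]

end KernelBound

theorem stmt_18_general (d : ℕ) (β₁ β₂ β₃ β₄ : ℝ)
    (hβ₂₁ : β₂ < β₁) (hβ₃ : 0 ≤ β₃) (hβ₄ : 0 ≤ β₄) :
    ∃ c : ℝ, 0 < c ∧
      ∀ z₀ : Pt (d - 1), z₀.2 = 0 →
      ∀ η : ℝ, 0 < η → η ≤ 1 / 4 →
      ∀ z : Pt (d - 1), 0 < z.2 → z.2 ≤ 1 / 8 →
        (∫⁻ y in {y : Pt (d - 1) | 0 < y.2 ∧ nrm (y - z₀) < η},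
            ENNReal.ofReal
              ((max z.2 y.2) ^ (-(β₁ - β₂)) *
                (Real.log (1 + max z.2 y.2 / min z.2 y.2)) ^ β₃ *
                (Real.log (1 / max z.2 y.2)) ^ β₄))
          ≤ ENNReal.ofReal (c * z.2 ^ (-(β₁ - β₂))) *
              ∫⁻ y in {y : Pt (d - 1) | 0 < y.2 ∧ nrm (y - z₀) < η},
                ENNReal.ofReal (|Real.log y.2| ^ (β₃ + β₄)) := by
  obtain ⟨C, hC0, hC⟩ := exists_kernel_le (sub_pos.mpr hβ₂₁) hβ₃ hβ₄
  refine ⟨C, hC0, fun z₀ hz₀ η _ hη4 z hz hz8 => ?_⟩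
  have hS : MeasurableSet {y : Pt (d - 1) | 0 < y.2 ∧ nrm (y - z₀) < η} :=
    ((isOpen_lt continuous_const continuous_snd).inter
      (isOpen_lt (continuous_nrm.comp (continuous_sub_right z₀)) continuous_const)).measurableSet
  rw [← lintegral_const_mul' _ _ ENNReal.ofReal_ne_top]
  refine setLIntegral_mono' hS fun y ⟨hy, hyη⟩ => ?_
  have hy4 : y.2 ≤ 1 / 4 := by
    have := abs_snd_le_nrm (y - z₀)
    simp only [Prod.snd_sub, hz₀, sub_zero] at this
    linarith [le_abs_self y.2]
  rw [← ENNReal.ofReal_mul (by positivity)]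
  exact ENNReal.ofReal_le_ofReal (hC z.2 y.2 hz (by linarith) hy hy4)

theorem stmt_18 (d : ℕ) (hd : 2 ≤ d) (β₁ β₂ β₃ β₄ : ℝ)
    (hβ₂0 : 0 ≤ β₂) (hβ₂₁ : β₂ < β₁) (hβ₃ : 0 ≤ β₃) (hβ₄ : 0 ≤ β₄) :
    ∃ c : ℝ, 0 < c ∧
      ∀ z₀ : Pt (d - 1), z₀.2 = 0 →
      ∀ η : ℝ, 0 < η → η ≤ 1 / 4 →
      ∀ z : Pt (d - 1), 0 < z.2 → z.2 ≤ 1 / 8 →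
        (∫⁻ y in {y : Pt (d - 1) | 0 < y.2 ∧ nrm (y - z₀) < η},
            ENNReal.ofReal
              ((max z.2 y.2) ^ (-(β₁ - β₂)) *
                (Real.log (1 + max z.2 y.2 / min z.2 y.2)) ^ β₃ *
                (Real.log (1 / max z.2 y.2)) ^ β₄))
          ≤ ENNReal.ofReal (c * z.2 ^ (-(β₁ - β₂))) *
              ∫⁻ y in {y : Pt (d - 1) | 0 < y.2 ∧ nrm (y - z₀) < η},
                ENNReal.ofReal (|Real.log y.2| ^ (β₃ + β₄)) :=
  stmt_18_general d β₁ β₂ β₃ β₄ hβ₂₁ hβ₃ hβ₄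
end
end
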